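/- arXiv:2102.06852 — 2 statements merged into one kernel-verified Lean document; each statement's English description precedes it below -/
import Mathlib

section
/- Let f : ℝ^N → ℝ be convex differentiable with nonempty minimizer set X_f, and suppose f is restricted strongly convex on a convex set C with constant α > 0. Then for every x ∈ C, f(x) − min f ≤ (1/α)‖∇f(x)‖₂². -/
/-!
Let `p` be the projection of `x`. As a minimizer of `f`, `p` has `∇f(p) = 0`, so restricted strong
convexity reads `α‖p - x‖² ≤ ⟪-∇f(x), p - x⟫`; Cauchy–Schwarz and AM–GM then give
`⟪-∇f(x), p - x⟫ ≤ ‖∇f(x)‖² / α`. The first-order condition for convexity bounds `f(x) - f(p)`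
by the same inner product, and `f(p) = min f`.
-/

open RealInnerProductSpace

variable {E : Type*}

theorem ConvexOn.hasFDerivAt_apply_sub_le [NormedAddCommGroup E] [NormedSpace ℝ E]
    {s : Set E} {f : E → ℝ} {f' : E →L[ℝ] ℝ} {x y : E}
    (hf : ConvexOn ℝ s f) (hx : x ∈ s) (hy : y ∈ s) (hf' : HasFDerivAt f f' x) :
    f' (y - x) ≤ f y - f x := by
  let ℓ : ℝ →ᵃ[ℝ] E := AffineMap.lineMap x y
  have hline : HasDerivAt (f ∘ ℓ) (f' (y - x)) 0 :=
    hf'.comp_hasDerivAt_of_eq 0 AffineMap.hasDerivAt_lineMap (by simp [ℓ])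
  have hslope := (hf.comp_affineMap ℓ).le_slope_of_hasDerivAt
    (by simpa [ℓ] using hx) (by simpa [ℓ] using hy) zero_lt_one hline
  simpa [slope_def_field, ℓ] using hslope

section InnerProductSpace

variable [NormedAddCommGroup E] [InnerProductSpace ℝ E]

theorem inner_le_norm_sq_div_of_mul_norm_sq_le_inner {α : ℝ} (hα : 0 < α) {u v : E}
    (h : α * ‖v‖ ^ 2 ≤ ⟪u, v⟫) : ⟪u, v⟫ ≤ ‖u‖ ^ 2 / α := by
  rw [le_div_iff₀ hα]
  nlinarith [real_inner_le_norm u v, sq_nonneg (‖u‖ - α * ‖v‖)]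

variable [CompleteSpace E]

theorem ConvexOn.inner_gradient_sub_le {s : Set E} {f : E → ℝ} {x y : E}
    (hf : ConvexOn ℝ s f) (hx : x ∈ s) (hy : y ∈ s) (hfx : DifferentiableAt ℝ f x) :
    ⟪gradient f x, y - x⟫ ≤ f y - f x := by
  simpa using hf.hasFDerivAt_apply_sub_le hx hy hfx.hasGradientAt.hasFDerivAt

theorem IsLocalMin.gradient_eq_zero {f : E → ℝ} {x : E} (h : IsLocalMin f x) :
    gradient f x = 0 := by
  simp [gradient, h.fderiv_eq_zero]

end InnerProductSpace

theorem restricted_strong_convexity_bound_general {N : ℕ} (α : ℝ) (hα : 0 < α)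
    (f : EuclideanSpace ℝ (Fin N) → ℝ)
    (hconv : ConvexOn ℝ Set.univ f)
    (hdiff : Differentiable ℝ f)
    (Xf : Set (EuclideanSpace ℝ (Fin N)))
    (hXf : Xf = {x | ∀ y, f x ≤ f y})
    (C : Set (EuclideanSpace ℝ (Fin N)))
    (proj : EuclideanSpace ℝ (Fin N) → EuclideanSpace ℝ (Fin N))
    (hproj : ∀ x ∈ C, proj x ∈ Xf ∩ C ∧ ∀ w ∈ Xf ∩ C, ‖x - proj x‖ ≤ ‖x - w‖)
    (hrsc : ∀ x ∈ C,
      α * ‖proj x - x‖ ^ 2 ≤ ⟪gradient f (proj x) - gradient f x, proj x - x⟫) :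
    ∀ x ∈ C, ∀ xm ∈ Xf, f x - f xm ≤ (1 / α) * ‖gradient f x‖ ^ 2 := by
  subst hXf
  intro x hx xm _
  have hmin : ∀ y, f (proj x) ≤ f y := (hproj x hx).1.1
  have hrsc_x := hrsc x hx
  rw [IsLocalMin.gradient_eq_zero (.of_forall hmin), zero_sub] at hrsc_x
  have hfirst_order : ⟪gradient f x, proj x - x⟫ ≤ f (proj x) - f x :=
    hconv.inner_gradient_sub_le trivial trivial (hdiff x)
  have hbound := inner_le_norm_sq_div_of_mul_norm_sq_le_inner hα hrsc_x
  rw [norm_neg, inner_neg_left] at hbound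
  rw [one_div_mul_eq_div]
  linarith [hmin xm]

theorem restricted_strong_convexity_bound {N : ℕ} (α : ℝ) (hα : 0 < α)
    (f : EuclideanSpace ℝ (Fin N) → ℝ)
    (hconv : ConvexOn ℝ Set.univ f)
    (hdiff : Differentiable ℝ f)
    (Xf : Set (EuclideanSpace ℝ (Fin N)))
    (hXf : Xf = {x | ∀ y, f x ≤ f y}) (hXfne : Xf.Nonempty)
    (C : Set (EuclideanSpace ℝ (Fin N))) (hC : Convex ℝ C)
    (proj : EuclideanSpace ℝ (Fin N) → EuclideanSpace ℝ (Fin N))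
    (hproj : ∀ x ∈ C, proj x ∈ Xf ∩ C ∧ ∀ w ∈ Xf ∩ C, ‖x - proj x‖ ≤ ‖x - w‖)
    (hrsc : ∀ x ∈ C,
      α * ‖proj x - x‖ ^ 2 ≤ ⟪gradient f (proj x) - gradient f x, proj x - x⟫) :
    ∀ x ∈ C, ∀ xm ∈ Xf, f x - f xm ≤ (1 / α) * ‖gradient f x‖ ^ 2 :=
  restricted_strong_convexity_bound_general α hα f hconv hdiff Xf hXf C proj hproj hrsc
end

section
/- One-step descent of the regularized Kaczmarz update: let A ∈ ℝ^{1×N₂×N₃}, B ∈ ℝ^{1×K×N₃} with A ≠ 0, and let f be α_f-strongly convex on ℝ^{N₂×K×N₃}. Given Z̄ and X̄ = ∇f*(Z̄), define Z = Z̄ + t·(Aᵀ/‖A‖_F²)*(B − A*X̄) and X = ∇f*(Z). If 0 < t < 2α_f/N₃, then for every H with A*H = B, D_{f,Z}(X, H) ≤ D_{f,Z̄}(X̄, H) − (t/‖A‖_F²)(1 − tN₃/(2α_f))·‖B − A*X̄‖_F². -/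
open RealInnerProductSpace

/-- The tensor space ℝ^{N₂×K×N₃} as a Euclidean space. -/
abbrev T3 (N₂ K N₃ : ℕ) := EuclideanSpace ℝ (Fin N₂ × Fin K × Fin N₃)

/-- t-product `A * X` of `A ∈ ℝ^{1×N₂×N₃}` with `X ∈ ℝ^{N₂×K×N₃}`. -/
def sliceFwd {N₂ K N₃ : ℕ} [NeZero N₃] (A : Fin N₂ → Fin N₃ → ℝ)
    (X : T3 N₂ K N₃) : Fin K → Fin N₃ → ℝ :=
  fun q k => ∑ j, ∑ l, A j (k - l) * X (j, q, l)

/-- t-product `Aᵀ * R` of the tensor transpose `Aᵀ ∈ ℝ^{N₂×1×N₃}` with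
`R ∈ ℝ^{1×K×N₃}`. -/
noncomputable def sliceAdj {N₂ K N₃ : ℕ} [NeZero N₃] (A : Fin N₂ → Fin N₃ → ℝ)
    (R : Fin K → Fin N₃ → ℝ) : T3 N₂ K N₃ :=
  (WithLp.equiv 2 _).symm fun p => ∑ l, A p.1 (l - p.2.2) * R p.2.1 l

/-- Squared Frobenius norm of `A ∈ ℝ^{1×N₂×N₃}`. -/
def frobSqA {N₂ N₃ : ℕ} (A : Fin N₂ → Fin N₃ → ℝ) : ℝ :=
  ∑ j, ∑ k, (A j k) ^ 2

/-- The convex (Fenchel) conjugate `f*(z) = sup_x ⟪z,x⟫ - f(x)`. -/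
noncomputable def fconj {N₂ K N₃ : ℕ} (f : T3 N₂ K N₃ → ℝ) (z : T3 N₂ K N₃) : ℝ :=
  ⨆ x, ⟪z, x⟫ - f x

/-- Bregman distance `D_{f,Z}(∇f*(Z), H) = f(H) + f*(Z) - ⟪Z, H⟫`. -/
noncomputable def breg {N₂ K N₃ : ℕ} (f : T3 N₂ K N₃ → ℝ) (Z H : T3 N₂ K N₃) : ℝ :=
  f H + fconj f Z - ⟪Z, H⟫

/-!
The minimizer `m` of `f - ⟪Z̄, ·⟫` exists, and by `α`-strong convexity `f - ⟪Z̄, ·⟫` exceeds its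
minimum by at least `α / 2 * ‖· - m‖ ^ 2`. Hence `f*` is squeezed between the affine function
`w ↦ ⟪w, m⟫ - f m` and that function plus `‖w - Z̄‖ ^ 2 / (2α)`, so `∇f*(Z̄) = m = X̄` and
`f*(Z) ≤ f*(Z̄) + ⟪Z - Z̄, X̄⟫ + ‖Z - Z̄‖ ^ 2 / (2α)`. For the Kaczmarz step
`Z - Z̄ = s • Aᵀ * R` with residual `R = B - A * X̄`, the adjoint identity and `A * H = B` give
`⟪Z - Z̄, H - X̄⟫ = s ‖R‖²`, while `‖Aᵀ * R‖² ≤ N₃ ‖A‖² ‖R‖²` controls the quadratic term.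
-/

open Filter Topology

section TProduct

variable {N₂ K N₃ : ℕ} [NeZero N₃] (A : Fin N₂ → Fin N₃ → ℝ)

lemma sliceAdj_apply (R : Fin K → Fin N₃ → ℝ) (p : Fin N₂ × Fin K × Fin N₃) :
    sliceAdj A R p = ∑ l, A p.1 (l - p.2.2) * R p.2.1 l := rfl

lemma inner_sliceAdj (R : Fin K → Fin N₃ → ℝ) (X : T3 N₂ K N₃) :
    ⟪sliceAdj A R, X⟫ = ∑ q, ∑ l, R q l * sliceFwd A X q l := by
  simp only [PiLp.inner_apply, RCLike.inner_apply, conj_trivial, sliceAdj_apply, sliceFwd,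
    Fintype.sum_prod_type, Finset.mul_sum]
  rw [Finset.sum_comm]
  refine Finset.sum_congr rfl fun q _ => ?_
  conv_rhs => rw [Finset.sum_comm]
  refine Finset.sum_congr rfl fun j _ => ?_
  rw [Finset.sum_comm]
  exact Finset.sum_congr rfl fun l _ => Finset.sum_congr rfl fun k _ => by ring

lemma sq_sliceAdj_apply_le (R : Fin K → Fin N₃ → ℝ) (p : Fin N₂ × Fin K × Fin N₃) :
    sliceAdj A R p ^ 2 ≤ (∑ k, A p.1 k ^ 2) * ∑ l, R p.2.1 l ^ 2 := by
  obtain ⟨j, q, k⟩ := p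
  rw [sliceAdj_apply]
  calc (∑ l, A j (l - k) * R q l) ^ 2 ≤ (∑ l, A j (l - k) ^ 2) * ∑ l, R q l ^ 2 :=
        Finset.sum_mul_sq_le_sq_mul_sq _ _ _
    _ = (∑ l, A j l ^ 2) * ∑ l, R q l ^ 2 := by
        congr 1
        exact Equiv.sum_comp (Equiv.subRight k) fun l => A j l ^ 2

lemma norm_sliceAdj_sq_le (R : Fin K → Fin N₃ → ℝ) :
    ‖sliceAdj A R‖ ^ 2 ≤ N₃ * frobSqA A * ∑ q, ∑ l, R q l ^ 2 := by
  rw [EuclideanSpace.norm_sq_eq]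
  calc ∑ p, ‖sliceAdj A R p‖ ^ 2
      ≤ ∑ p : Fin N₂ × Fin K × Fin N₃, (∑ k, A p.1 k ^ 2) * ∑ l, R p.2.1 l ^ 2 :=
        Finset.sum_le_sum fun p _ => by
          simpa only [Real.norm_eq_abs, sq_abs] using sq_sliceAdj_apply_le A R p
    _ = N₃ * frobSqA A * ∑ q, ∑ l, R q l ^ 2 := by
        simp only [Fintype.sum_prod_type, Finset.sum_const, Finset.card_univ, Fintype.card_fin,
          nsmul_eq_mul, frobSqA, ← Finset.sum_mul, ← Finset.mul_sum]
        ring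

lemma inner_sliceAdj_residual {B : Fin K → Fin N₃ → ℝ} {H : T3 N₂ K N₃} (hH : sliceFwd A H = B)
    (X : T3 N₂ K N₃) :
    ⟪sliceAdj A (fun q k => B q k - sliceFwd A X q k), H - X⟫ =
      ∑ q, ∑ k, (B q k - sliceFwd A X q k) ^ 2 := by
  simp only [inner_sub_right, inner_sliceAdj, hH, ← Finset.sum_sub_distrib, ← mul_sub, sq]

end TProduct

section StrongConvexity

variable {E : Type*} [NormedAddCommGroup E] [InnerProductSpace ℝ E] {α : ℝ} {f : E → ℝ}

lemma StrongConvexOn.sub_inner (hf : StrongConvexOn Set.univ α f) (z : E) :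
    StrongConvexOn Set.univ α fun x => f x - ⟪z, x⟫ := by
  have h := hf.sub (uniformConcaveOn_zero.2 ((innerₛₗ ℝ z).concaveOn convex_univ))
  rw [add_zero] at h
  exact h

lemma StrongConvexOn.le_of_one_le_norm (hf : StrongConvexOn Set.univ α f) {c : ℝ}
    (hc : ∀ y ∈ Metric.closedBall (0 : E) 1, c ≤ f y) {x : E} (hx : 1 ≤ ‖x‖) :
    ‖x‖ * c + (1 - ‖x‖) * f 0 + α / 2 * (‖x‖ ^ 2 - ‖x‖) ≤ f x := by
  have hr : 0 < ‖x‖ := one_pos.trans_le hx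
  have ha : ‖x‖⁻¹ ≤ 1 := inv_le_one_of_one_le₀ hx
  have hconv := hf.2 (Set.mem_univ x) (Set.mem_univ 0) (inv_nonneg.2 hr.le) (sub_nonneg.2 ha)
    (add_sub_cancel _ _)
  have hball : ‖x‖⁻¹ • x + (1 - ‖x‖⁻¹) • (0 : E) ∈ Metric.closedBall (0 : E) 1 := by
    simp [norm_smul, hr.ne']
  have key := (hc _ hball).trans hconv
  simp only [smul_eq_mul, sub_zero] at key
  have := mul_le_mul_of_nonneg_left key hr.le
  field_simp at this
  linarith

lemma StrongConvexOn.tendsto_cocompact [ProperSpace E] (hf : StrongConvexOn Set.univ α f)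
    (hα : 0 < α) (hcont : Continuous f) : Tendsto f (cocompact E) atTop := by
  obtain ⟨x₀, -, hx₀⟩ := (isCompact_closedBall (0 : E) 1).exists_isMinOn
    ⟨0, Metric.mem_closedBall_self zero_le_one⟩ hcont.continuousOn
  set c := f x₀
  have hq : Tendsto (fun r : ℝ => r * c + (1 - r) * f 0 + α / 2 * (r ^ 2 - r)) atTop atTop := by
    have : (fun r : ℝ => r * c + (1 - r) * f 0 + α / 2 * (r ^ 2 - r)) =
        fun r => r * (c - f 0 - α / 2 + α / 2 * r) + f 0 := by
      funext r; ring
    rw [this]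
    exact tendsto_atTop_add_const_right _ _ <| tendsto_id.atTop_mul_atTop₀ <|
      tendsto_atTop_add_const_left _ _ (tendsto_id.const_mul_atTop (by positivity))
  refine tendsto_atTop_mono' _ ?_ (hq.comp tendsto_norm_cocompact_atTop)
  filter_upwards [tendsto_norm_cocompact_atTop.eventually_ge_atTop 1] with x hx
  exact hf.le_of_one_le_norm (fun y hy => hx₀ hy) hx

lemma StrongConvexOn.add_sq_le_of_isMinOn (hf : StrongConvexOn Set.univ α f) {m : E}
    (hm : IsMinOn f Set.univ m) (x : E) : f m + α / 2 * ‖x - m‖ ^ 2 ≤ f x := by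
  have hsmall : ∀ a ∈ Set.Ioo (0 : ℝ) 1, f m + (1 - a) * (α / 2 * ‖x - m‖ ^ 2) ≤ f x := by
    rintro a ⟨ha0, ha1⟩
    have hconv := (hm (Set.mem_univ (a • x + (1 - a) • m))).trans <|
      hf.2 (Set.mem_univ x) (Set.mem_univ m) ha0.le (sub_nonneg.2 ha1.le) (add_sub_cancel _ _)
    simp only [smul_eq_mul] at hconv
    refine le_of_mul_le_mul_left ?_ ha0
    nlinarith
  have hlim : Tendsto (fun a : ℝ => f m + (1 - a) * (α / 2 * ‖x - m‖ ^ 2)) (𝓝[>] 0)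
      (𝓝 (f m + α / 2 * ‖x - m‖ ^ 2)) := by
    refine tendsto_nhdsWithin_of_tendsto_nhds ?_
    have hcont : Continuous fun a : ℝ => f m + (1 - a) * (α / 2 * ‖x - m‖ ^ 2) := by fun_prop
    simpa using hcont.tendsto 0
  exact le_of_tendsto hlim (Filter.mem_of_superset (Ioo_mem_nhdsGT one_pos) hsmall)

lemma hasGradientAt_of_abs_sub_inner_le [CompleteSpace E] {g : E → ℝ} {m z : E} (C : ℝ)
    (h : ∀ w, |g w - g z - ⟪m, w - z⟫| ≤ C * ‖w - z‖ ^ 2) : HasGradientAt g m z := by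
  rw [hasGradientAt_iff_hasFDerivAt, hasFDerivAt_iff_isLittleO_nhds_zero]
  have hO : (fun d => g (z + d) - g z - InnerProductSpace.toDual ℝ E m d) =O[𝓝 0]
      fun d => ‖d‖ ^ 2 :=
    Asymptotics.IsBigO.of_bound C <| Eventually.of_forall fun d => by
      simpa using h (z + d)
  exact hO.trans_isLittleO (Asymptotics.isLittleO_norm_pow_id one_lt_two)

lemma StrongConvexOn.exists_isMinOn_sub_inner [FiniteDimensional ℝ E]
    (hf : StrongConvexOn Set.univ α f) (hα : 0 < α) (z : E) :
    ∃ m, IsMinOn (fun x => f x - ⟪z, x⟫) Set.univ m := by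
  have hcont : Continuous fun x => f x - ⟪z, x⟫ :=
    continuousOn_univ.1 <| ((hf.sub_inner z).convexOn fun r => by positivity).continuousOn
      isOpen_univ
  obtain ⟨m, hm⟩ := hcont.exists_forall_le ((hf.sub_inner z).tendsto_cocompact hα hcont)
  exact ⟨m, fun y _ => hm y⟩

lemma StrongConvexOn.inner_sub_le (hf : StrongConvexOn Set.univ α f) (hα : 0 < α) {z m : E}
    (hm : IsMinOn (fun x => f x - ⟪z, x⟫) Set.univ m) (w x : E) :
    ⟪w, x⟫ - f x ≤ ⟪w, m⟫ - f m + ‖w - z‖ ^ 2 / (2 * α) := by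
  have hgrowth := (hf.sub_inner z).add_sq_le_of_isMinOn hm x
  have hcs : ⟪w - z, x - m⟫ ≤ ‖w - z‖ * ‖x - m‖ := real_inner_le_norm _ _
  -- Young's inequality `ab ≤ α b² / 2 + a² / (2α)`
  have hyoung : ‖w - z‖ * ‖x - m‖ - α / 2 * ‖x - m‖ ^ 2 ≤ ‖w - z‖ ^ 2 / (2 * α) := by
    rw [le_div_iff₀ (by positivity)]
    nlinarith [sq_nonneg (α * ‖x - m‖ - ‖w - z‖)]
  have hsplit : ⟪w, x⟫ - ⟪w, m⟫ = ⟪z, x⟫ - ⟪z, m⟫ + ⟪w - z, x - m⟫ := by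
    simp only [inner_sub_left, inner_sub_right]
    ring
  linarith

lemma StrongConvexOn.exists_hasGradientAt_conj [FiniteDimensional ℝ E]
    (hf : StrongConvexOn Set.univ α f) (hα : 0 < α) (z : E) :
    ∃ m, HasGradientAt (fun w => ⨆ x, ⟪w, x⟫ - f x) m z ∧ ∀ w,
      ⨆ x, ⟪w, x⟫ - f x ≤ (⨆ x, ⟪z, x⟫ - f x) + ⟪w - z, m⟫ + ‖w - z‖ ^ 2 / (2 * α) := by
  obtain ⟨m, hm⟩ := hf.exists_isMinOn_sub_inner hα z
  have hupper w : ⨆ x, ⟪w, x⟫ - f x ≤ ⟪w, m⟫ - f m + ‖w - z‖ ^ 2 / (2 * α) :=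
    ciSup_le (hf.inner_sub_le hα hm w)
  have hlower w : ⟪w, m⟫ - f m ≤ ⨆ x, ⟪w, x⟫ - f x :=
    le_ciSup ⟨_, Set.forall_mem_range.2 (hf.inner_sub_le hα hm w)⟩ m
  have hz : ⨆ x, ⟪z, x⟫ - f x = ⟪z, m⟫ - f m :=
    le_antisymm (by simpa using hupper z) (hlower z)
  have hshift w : ⟪w, m⟫ - f m = ⟪z, m⟫ - f m + ⟪w - z, m⟫ := by
    rw [inner_sub_left]; ring
  refine ⟨m, hasGradientAt_of_abs_sub_inner_le (1 / (2 * α)) fun w => ?_, fun w => ?_⟩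
  · rw [hz, real_inner_comm (w - z), one_div_mul_eq_div, abs_le]
    constructor <;> linarith [hupper w, hlower w, hshift w,
      (by positivity : 0 ≤ ‖w - z‖ ^ 2 / (2 * α))]
  · rw [hz, ← hshift]
    exact hupper w

end StrongConvexity

theorem kaczmarz_tensor_one_step_descent_general {N₂ K N₃ : ℕ} [NeZero N₃]
    (α t : ℝ) (hα : 0 < α) (f : T3 N₂ K N₃ → ℝ)
    (hf : StrongConvexOn Set.univ α f)
    (A : Fin N₂ → Fin N₃ → ℝ)
    (B : Fin K → Fin N₃ → ℝ)
    (Zb Xb Z : T3 N₂ K N₃)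
    (hXb : Xb = gradient (fconj f) Zb)
    (hZ : Z = Zb + (t / frobSqA A) •
      sliceAdj A (fun q k => B q k - sliceFwd A Xb q k)) :
    ∀ H : T3 N₂ K N₃, sliceFwd A H = B →
      breg f Z H ≤ breg f Zb H - (t / frobSqA A) * (1 - t * (N₃ : ℝ) / (2 * α)) *
        (∑ q, ∑ k, (B q k - sliceFwd A Xb q k) ^ 2) := by
  intro H hH
  set s := t / frobSqA A
  set R : Fin K → Fin N₃ → ℝ := fun q k => B q k - sliceFwd A Xb q k
  set S := ∑ q, ∑ k, (B q k - sliceFwd A Xb q k) ^ 2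
  obtain ⟨m, hgrad, hsmooth⟩ := hf.exists_hasGradientAt_conj hα Zb
  obtain rfl : Xb = m := hXb.trans hgrad.gradient
  have hstep : Z - Zb = s • sliceAdj A R := by rw [hZ, add_sub_cancel_left]
  have hinner : ⟪Z - Zb, H - Xb⟫ = s * S := by
    rw [hstep, real_inner_smul_left, inner_sliceAdj_residual A hH]
  have hnorm : ‖Z - Zb‖ ^ 2 ≤ s * t * N₃ * S := by
    have hs : s ^ 2 * frobSqA A = s * t := by
      rcases eq_or_ne (frobSqA A) 0 with h | h
      · simp [s, h]
      · simp only [s]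
        field_simp
    calc ‖Z - Zb‖ ^ 2 = s ^ 2 * ‖sliceAdj A R‖ ^ 2 := by
          rw [hstep, norm_smul, mul_pow, Real.norm_eq_abs, sq_abs]
      _ ≤ s ^ 2 * (N₃ * frobSqA A * S) := by gcongr; exact norm_sliceAdj_sq_le A R
      _ = s * t * N₃ * S := by linear_combination (N₃ * S) * hs
  have hquad : ‖Z - Zb‖ ^ 2 / (2 * α) ≤ s * t * N₃ * S / (2 * α) :=
    div_le_div_of_nonneg_right hnorm (by positivity)
  have hrate : s * (1 - t * N₃ / (2 * α)) * S = s * S - s * t * N₃ * S / (2 * α) := by ring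
  have hsplit : ⟪Z, H⟫ - ⟪Zb, H⟫ - ⟪Z - Zb, Xb⟫ = ⟪Z - Zb, H - Xb⟫ := by
    simp only [inner_sub_left, inner_sub_right]
  simp only [breg, fconj]
  linarith [hsmooth Z]

theorem kaczmarz_tensor_one_step_descent {N₂ K N₃ : ℕ} [NeZero N₃]
    (α t : ℝ) (hα : 0 < α) (f : T3 N₂ K N₃ → ℝ)
    (hf : StrongConvexOn Set.univ α f)
    (A : Fin N₂ → Fin N₃ → ℝ) (hA : A ≠ 0)
    (B : Fin K → Fin N₃ → ℝ)
    (ht : 0 < t) (ht2 : t < 2 * α / (N₃ : ℝ))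
    (Zb Xb Z X : T3 N₂ K N₃)
    (hXb : Xb = gradient (fconj f) Zb)
    (hZ : Z = Zb + (t / frobSqA A) •
      sliceAdj A (fun q k => B q k - sliceFwd A Xb q k))
    (hX : X = gradient (fconj f) Z) :
    ∀ H : T3 N₂ K N₃, sliceFwd A H = B →
      breg f Z H ≤ breg f Zb H - (t / frobSqA A) * (1 - t * (N₃ : ℝ) / (2 * α)) *
        (∑ q, ∑ k, (B q k - sliceFwd A Xb q k) ^ 2) :=
  kaczmarz_tensor_one_step_descent_general α t hα f hf A B Zb Xb Z hXb hZ
end
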